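/- Fix Δx > 0, Δt > 0, λ ∈ ℝ and an integer M ≥ 1. Let u : ℤ × ℤ → ℝ be a grid function with u(m + M, n) = u(m, n) for all (m,n) (spatial M-periodicity), and suppose u satisfies the MC₁₀(λ) scheme at every point: D_m F̃₁ + D_n u_{0,0} = 0, where F̃₁ = (1/3)·(μ_m μ_n u_{-1,0})·μ_m((μ_n u_{-1,0})²) + D_m²μ_n μ_m u_{-2,0} + λ·D_m D_n u_{-1,0}. Then the discrete momentum Σ_{i=0}^{M−1} (1/2)·u(i,n)·( u(i,n) + λ·(D_m² u_{-1,0})(i,n) ) is independent of n. -/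

import Mathlib

noncomputable section

set_option maxHeartbeats 2000000

/-- Shift operator: `(Sh i j u)(m,n) = u(m+i, n+j)`. -/
def Sh (i j : ℤ) (f : ℤ × ℤ → ℝ) : ℤ × ℤ → ℝ := fun p => f (p.1 + i, p.2 + j)

/-- Forward difference in space: `D_m f = (S_m f − f)/Δx`. -/
def Dm (dx : ℝ) (f : ℤ × ℤ → ℝ) : ℤ × ℤ → ℝ := fun p => (f (p.1 + 1, p.2) - f p) / dx

/-- Forward difference in time: `D_n f = (S_n f − f)/Δt`. -/
def Dn (dt : ℝ) (f : ℤ × ℤ → ℝ) : ℤ × ℤ → ℝ := fun p => (f (p.1, p.2 + 1) - f p) / dt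

/-- Forward average in space: `μ_m f = (S_m f + f)/2`. -/
def μm (f : ℤ × ℤ → ℝ) : ℤ × ℤ → ℝ := fun p => (f (p.1 + 1, p.2) + f p) / 2

/-- Forward average in time: `μ_n f = (S_n f + f)/2`. -/
def μn (f : ℤ × ℤ → ℝ) : ℤ × ℤ → ℝ := fun p => (f (p.1, p.2 + 1) + f p) / 2

/-- Discrete flux `F̃₁` of the MC₁₀(λ) scheme. -/
def F1MC10 (dx dt lam : ℝ) (u : ℤ × ℤ → ℝ) : ℤ × ℤ → ℝ :=
  (1/3 : ℝ) • (μm (μn (Sh (-1) 0 u)) * μm ((μn (Sh (-1) 0 u)) ^ 2))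
    + Dm dx (Dm dx (μn (μm (Sh (-2) 0 u))))
    + lam • Dm dx (Dn dt (Sh (-1) 0 u))

/-- Spatial periodicity with period `c`. -/
def PerZ (c : ℤ) (f : ℤ × ℤ → ℝ) : Prop := ∀ a b : ℤ, f (a + c, b) = f (a, b)

lemma perZ_Sh {c : ℤ} {f} (i j : ℤ) (hf : PerZ c f) : PerZ c (Sh i j f) := by
  intro a b
  simp only [Sh]
  rw [show a + c + i = (a + i) + c by ring, hf]

lemma perZ_Dm {c : ℤ} {f} (dx : ℝ) (hf : PerZ c f) : PerZ c (Dm dx f) := by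
  intro a b
  simp only [Dm]
  rw [show a + c + 1 = (a + 1) + c by ring, hf (a+1) b, hf a b]

lemma perZ_Dn {c : ℤ} {f} (dt : ℝ) (hf : PerZ c f) : PerZ c (Dn dt f) := by
  intro a b
  simp only [Dn]
  rw [hf a (b+1), hf a b]

lemma perZ_μm {c : ℤ} {f} (hf : PerZ c f) : PerZ c (μm f) := by
  intro a b
  simp only [μm]
  rw [show a + c + 1 = (a + 1) + c by ring, hf (a+1) b, hf a b]

lemma perZ_μn {c : ℤ} {f} (hf : PerZ c f) : PerZ c (μn f) := by
  intro a b
  simp only [μn]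
  rw [hf a (b+1), hf a b]

lemma perZ_F1MC10 {c : ℤ} {u} (dx dt lam : ℝ) (hu : PerZ c u) :
    PerZ c (F1MC10 dx dt lam u) := by
  intro a b
  have h1 := perZ_μm (perZ_μn (perZ_Sh (-1) 0 hu))
  have h2 : PerZ c ((μn (Sh (-1) 0 u)) ^ 2) := by
    intro a b
    simp only [Pi.pow_apply]
    rw [perZ_μn (perZ_Sh (-1) 0 hu) a b]
  have h3 := perZ_μm h2
  have h4 := perZ_Dm dx (perZ_Dm dx (perZ_μn (perZ_μm (perZ_Sh (-2) 0 hu))))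
  have h5 := perZ_Dm dx (perZ_Dn dt (perZ_Sh (-1) 0 hu))
  simp only [F1MC10, Pi.add_apply, Pi.mul_apply, Pi.smul_apply, smul_eq_mul]
  rw [h1 a b, h3 a b, h4 a b, h5 a b]

/-- Discrete momentum flux used in the telescoping argument. -/
def Tflux (dx dt lam : ℝ) (u : ℤ × ℤ → ℝ) (n j : ℤ) : ℝ :=
  -(dt/dx) * ((u (j-1, n+1) + u (j-1, n))/2) * F1MC10 dx dt lam u (j, n)
  + (dt/(12*dx)) * ((u (j-1, n+1) + u (j-1, n))/2)^4
  + (dt/(2*dx^3)) * (((u (j-1, n+1) + u (j-1, n))/2) - ((u (j-2, n+1) + u (j-2, n))/2))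
      * (((u (j, n+1) + u (j, n))/2) - ((u (j-1, n+1) + u (j-1, n))/2))
  + (lam/(2*dx^2)) * ( u (j-1, n+1) * (u (j, n+1) - u (j-1, n+1))
                     - u (j-1, n) * (u (j, n) - u (j-1, n)) )

lemma perZ_Tflux {c : ℤ} {u} (dx dt lam : ℝ) (n : ℤ) (hu : PerZ c u) (j : ℤ) :
    Tflux dx dt lam u n (j + c) = Tflux dx dt lam u n j := by
  have hF := perZ_F1MC10 dx dt lam hu j n
  simp only [Tflux]
  rw [show j + c - 1 = (j - 1) + c by ring, show j + c - 2 = (j - 2) + c by ring,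
    hu (j-1) (n+1), hu (j-1) n, hu (j-2) (n+1), hu (j-2) n, hu j (n+1), hu j n, hF]

lemma ptwise (dx dt lam : ℝ) (hdx : dx ≠ 0) (hdt : dt ≠ 0) (u : ℤ × ℤ → ℝ) (n i : ℤ)
    (hs : (Dm dx (F1MC10 dx dt lam u) + Dn dt u) (i, n) = 0) :
    ((1/2 : ℝ) * u (i, n+1) * (u (i, n+1) + lam * Dm dx (Dm dx (Sh (-1) 0 u)) (i, n+1)))
      - ((1/2 : ℝ) * u (i, n) * (u (i, n) + lam * Dm dx (Dm dx (Sh (-1) 0 u)) (i, n)))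
    = Tflux dx dt lam u n (i+1) - Tflux dx dt lam u n i := by
  simp only [Pi.add_apply, Dm, Dn] at hs
  have hFp : F1MC10 dx dt lam u (i+1, n)
      = F1MC10 dx dt lam u (i, n) - dx/dt*(u (i, n+1) - u (i, n)) := by
    field_simp at hs ⊢
    linarith
  simp only [Tflux]
  rw [hFp]
  simp only [F1MC10, Dm, Dn, μm, μn, Sh, Pi.add_apply, Pi.mul_apply, Pi.smul_apply,
    Pi.pow_apply, smul_eq_mul]
  norm_num
  field_simp
  ring_nf

/-- Discrete momentum. -/
def Pmom (dx lam : ℝ) (u : ℤ × ℤ → ℝ) (M : ℕ) (n : ℤ) : ℝ :=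
  ∑ i ∈ Finset.range M,
    (1/2 : ℝ) * u ((i : ℤ), n)
      * (u ((i : ℤ), n) + lam * Dm dx (Dm dx (Sh (-1) 0 u)) ((i : ℤ), n))

/-- Spatially periodic solutions of the MC₁₀(λ) scheme conserve the discrete momentum. -/
theorem MC10_discrete_momentum_invariant (dx dt lam : ℝ) (hdx : 0 < dx) (hdt : 0 < dt)
    (M : ℕ) (hM : 1 ≤ M) (u : ℤ × ℤ → ℝ)
    (hper : ∀ m n : ℤ, u (m + (M : ℤ), n) = u (m, n))
    (hscheme : ∀ p : ℤ × ℤ, (Dm dx (F1MC10 dx dt lam u) + Dn dt u) p = 0) :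
    ∀ n₁ n₂ : ℤ,
      (∑ i ∈ Finset.range M,
          (1/2 : ℝ) * u ((i : ℤ), n₁)
            * (u ((i : ℤ), n₁) + lam * Dm dx (Dm dx (Sh (-1) 0 u)) ((i : ℤ), n₁)))
        = ∑ i ∈ Finset.range M,
            (1/2 : ℝ) * u ((i : ℤ), n₂)
              * (u ((i : ℤ), n₂) + lam * Dm dx (Dm dx (Sh (-1) 0 u)) ((i : ℤ), n₂)) := by
  intro n₁ n₂
  have hu : PerZ (M : ℤ) u := fun a b => hper a b
  have step : ∀ n : ℤ, Pmom dx lam u M (n+1) = Pmom dx lam u M n := by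
    intro n
    have hsum : Pmom dx lam u M (n+1) - Pmom dx lam u M n
        = ∑ i ∈ Finset.range M,
            (Tflux dx dt lam u n ((i:ℤ)+1) - Tflux dx dt lam u n (i:ℤ)) := by
      simp only [Pmom]
      rw [← Finset.sum_sub_distrib]
      exact Finset.sum_congr rfl fun i _ =>
        ptwise dx dt lam hdx.ne' hdt.ne' u n i (hscheme ((i:ℤ), n))
    have htel : ∑ i ∈ Finset.range M,
        (Tflux dx dt lam u n ((i:ℤ)+1) - Tflux dx dt lam u n (i:ℤ))
        = Tflux dx dt lam u n (M:ℤ) - Tflux dx dt lam u n 0 := by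
      have h := Finset.sum_range_sub (fun k : ℕ => Tflux dx dt lam u n (k:ℤ)) M
      push_cast at h
      exact h
    have hMT : Tflux dx dt lam u n (M:ℤ) = Tflux dx dt lam u n 0 := by
      have h := perZ_Tflux dx dt lam n hu 0
      rwa [zero_add] at h
    rw [htel, hMT] at hsum
    linarith
  have key : ∀ n : ℤ, Pmom dx lam u M n = Pmom dx lam u M 0 := by
    intro n
    induction n using Int.induction_on with
    | zero => rfl
    | succ k ih => rw [step, ih]
    | pred k ih =>
      have h := step (-(k:ℤ) - 1)
      rw [show (-(k:ℤ) - 1 + 1) = -(k:ℤ) by ring] at h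
      rw [← h, ih]
  exact (key n₁).trans (key n₂).symm
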